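/- Let P and V be Poisson algebras over a field F, and suppose given bilinear maps P × V → V, (p,y) ↦ p∗y; V × P → V, (x,q) ↦ x∗q; and P × V → V, (p,y) ↦ ⟦p,y⟧, such that: (a) for every p ∈ P the triple (p∗−, −∗p, ⟦p,−⟧) belongs to [V]; (b) the map p ↦ (p∗−, −∗p, ⟦p,−⟧) preserves both operations of [V], i.e., for all p,q ∈ P and x ∈ V: (pq)∗x = p∗(q∗x), x∗(pq) = (x∗p)∗q, ⟦pq,x⟧ = p∗⟦q,x⟧ + ⟦p,x⟧∗q, [p,q]∗x = p∗⟦q,x⟧ − ⟦q, p∗x⟧, x∗[p,q] = ⟦q,x⟧∗p − ⟦q, x∗p⟧, and ⟦[p,q],x⟧ = ⟦p,⟦q,x⟧⟧ − ⟦q,⟦p,x⟧⟧; and (c) p∗(x∗q) = (p∗x)∗q for all p,q ∈ P and x ∈ V. Then the direct sum P ⊕ V with the operations (p,x)⋄(q,y) = (pq, x·y + p∗y + x∗q) and {(p,x),(q,y)} = ([p,q], [x,y] + ⟦p,y⟧ − ⟦q,x⟧) is a Poisson algebra. -/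
import Mathlib


/-- Membership in `[V]` for a Poisson algebra `(V, m, b)`: `(f, F, d)` is such
that `(f, F)` is a bimultiplier of `(V, ·)`, `d` is a derivation of the Lie
algebra `(V, [-,-])`, and conditions (V1), (V2), (V3) hold. -/
def MemBrV {K V : Type*} [Field K] [AddCommGroup V] [Module K V]
    (m b : V →ₗ[K] V →ₗ[K] V) (f F d : V →ₗ[K] V) : Prop :=
  (∀ x y : V, f (m x y) = m (f x) y) ∧
  (∀ x y : V, F (m x y) = m x (F y)) ∧
  (∀ x y : V, m x (f y) = m (F x) y) ∧
  (∀ x y : V, d (b x y) = b (d x) y + b x (d y)) ∧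
  (∀ x y : V, f (b x y) = b (f x) y - m (d y) x) ∧
  (∀ x y : V, F (b x y) = b (F x) y - m x (d y)) ∧
  (∀ x y : V, d (m x y) = m (d x) y + m x (d y))

/-- Let `P, V` be Poisson algebras and suppose given bilinear
maps `l p y = p∗y`, `r q x = x∗q`, `lb p y = ⟦p,y⟧` such that (a) each triple
`(p∗−, −∗p, ⟦p,−⟧)` belongs to `[V]`, (b) `p ↦ (p∗−, −∗p, ⟦p,−⟧)` preserves
both operations of `[V]`, and (c) `p∗(x∗q) = (p∗x)∗q`. Then `P ⊕ V` with
`(p,x)⋄(q,y) = (pq, x·y + p∗y + x∗q)` and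
`{(p,x),(q,y)} = ([p,q], [x,y] + ⟦p,y⟧ − ⟦q,x⟧)` is a Poisson algebra. -/
theorem acting_morphism_gives_poisson_semidirect
    (K P V : Type*) [Field K] [AddCommGroup P] [Module K P]
    [AddCommGroup V] [Module K V]
    (mP : P →ₗ[K] P →ₗ[K] P) (bP : P →ₗ[K] P →ₗ[K] P)
    (mV : V →ₗ[K] V →ₗ[K] V) (bV : V →ₗ[K] V →ₗ[K] V)
    (hPassoc : ∀ p q t : P, mP (mP p q) t = mP p (mP q t))
    (hPalt : ∀ p : P, bP p p = 0)
    (hPjac : ∀ p q t : P, bP (bP p q) t + bP (bP q t) p + bP (bP t p) q = 0)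
    (hPpois : ∀ p q t : P, bP p (mP q t) = mP (bP p q) t + mP q (bP p t))
    (hVassoc : ∀ x y z : V, mV (mV x y) z = mV x (mV y z))
    (hValt : ∀ x : V, bV x x = 0)
    (hVjac : ∀ x y z : V, bV (bV x y) z + bV (bV y z) x + bV (bV z x) y = 0)
    (hVpois : ∀ x y z : V, bV x (mV y z) = mV (bV x y) z + mV y (bV x z))
    (l r lb : P →ₗ[K] V →ₗ[K] V)
    -- (a) each triple belongs to [V]:
    (ha : ∀ p : P, MemBrV mV bV (l p) (r p) (lb p))
    -- (b) the map preserves both operations of [V]: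
    (hb1 : ∀ (p q : P) (x : V), l (mP p q) x = l p (l q x))
    (hb2 : ∀ (p q : P) (x : V), r (mP p q) x = r q (r p x))
    (hb3 : ∀ (p q : P) (x : V), lb (mP p q) x = l p (lb q x) + r q (lb p x))
    (hb4 : ∀ (p q : P) (x : V), l (bP p q) x = l p (lb q x) - lb q (l p x))
    (hb5 : ∀ (p q : P) (x : V), r (bP p q) x = r p (lb q x) - lb q (r p x))
    (hb6 : ∀ (p q : P) (x : V), lb (bP p q) x = lb p (lb q x) - lb q (lb p x))
    -- (c) permutability:
    (hc : ∀ (p q : P) (x : V), l p (r q x) = r q (l p x))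
    (md bd : P × V → P × V → P × V)
    (hmd : ∀ u v : P × V,
      md u v = (mP u.1 v.1, mV u.2 v.2 + l u.1 v.2 + r v.1 u.2))
    (hbd : ∀ u v : P × V,
      bd u v = (bP u.1 v.1, bV u.2 v.2 + lb u.1 v.2 - lb v.1 u.2)) :
    (∀ u v w : P × V, md (md u v) w = md u (md v w)) ∧
    (∀ u : P × V, bd u u = 0) ∧
    (∀ u v w : P × V, bd (bd u v) w + bd (bd v w) u + bd (bd w u) v = 0) ∧
    (∀ u v w : P × V, bd u (md v w) = md (bd u v) w + md v (bd u w)) := by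
  -- unpack the components of (a)
  have a1 : ∀ (p : P) (x y : V), l p (mV x y) = mV (l p x) y := fun p => (ha p).1
  have a2 : ∀ (p : P) (x y : V), r p (mV x y) = mV x (r p y) := fun p => (ha p).2.1
  have a3 : ∀ (p : P) (x y : V), mV x (l p y) = mV (r p x) y := fun p => (ha p).2.2.1
  have a4 : ∀ (p : P) (x y : V), lb p (bV x y) = bV (lb p x) y + bV x (lb p y) :=
    fun p => (ha p).2.2.2.1
  have a5 : ∀ (p : P) (x y : V), l p (bV x y) = bV (l p x) y - mV (lb p y) x :=
    fun p => (ha p).2.2.2.2.1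
  have a6 : ∀ (p : P) (x y : V), r p (bV x y) = bV (r p x) y - mV x (lb p y) :=
    fun p => (ha p).2.2.2.2.2.1
  have a7 : ∀ (p : P) (x y : V), lb p (mV x y) = mV (lb p x) y + mV x (lb p y) :=
    fun p => (ha p).2.2.2.2.2.2
  -- skew-symmetry of the brackets
  have sk : ∀ a b : V, bV a b + bV b a = 0 := by
    intro a b
    have h := hValt (a + b)
    simp only [map_add, LinearMap.add_apply, hValt a, hValt b] at h
    linear_combination (norm := abel) h
  have skP : ∀ a b : P, bP a b + bP b a = 0 := by
    intro a b
    have h := hPalt (a + b)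
    simp only [map_add, LinearMap.add_apply, hPalt a, hPalt b] at h
    linear_combination (norm := abel) h
  have lneg : ∀ (a b : P) (x : V), l (bP a b) x + l (bP b a) x = 0 := by
    intro a b x
    rw [← LinearMap.add_apply, ← map_add, skP a b]
    simp
  have rneg : ∀ (a b : P) (x : V), r (bP a b) x + r (bP b a) x = 0 := by
    intro a b x
    rw [← LinearMap.add_apply, ← map_add, skP a b]
    simp
  -- derived identities
  have A5' : ∀ (p : P) (a b : V), bV a (l p b) = l p (bV a b) - mV (lb p a) b := by
    intro p a b
    have h := a5 p b a
    have h2 : bV b a = -bV a b := by linear_combination (norm := abel) sk a b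
    rw [h2, map_neg] at h
    linear_combination (norm := abel) h + sk a (l p b)
  have A6' : ∀ (p : P) (a b : V), bV a (r p b) = r p (bV a b) - mV b (lb p a) := by
    intro p a b
    have h := a6 p b a
    have h2 : bV b a = -bV a b := by linear_combination (norm := abel) sk a b
    rw [h2, map_neg] at h
    linear_combination (norm := abel) h + sk a (r p b)
  have cross1 : ∀ (p q : P) (b : V),
      lb p (l q b) = l q (lb p b) + l p (lb q b) - lb q (l p b) := by
    intro p q b
    linear_combination (norm := abel) hb4 q p b - lneg q p b + hb4 p q b
  have cross2 : ∀ (p t : P) (b : V),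
      lb p (r t b) = r t (lb p b) + r p (lb t b) - lb t (r p b) := by
    intro p t b
    linear_combination (norm := abel) hb5 t p b - rneg t p b + hb5 p t b
  refine ⟨?_, ?_, ?_, ?_⟩
  · -- associativity
    rintro ⟨p, x⟩ ⟨q, y⟩ ⟨t, z⟩
    simp only [hmd, Prod.mk.injEq, map_add, map_sub, LinearMap.add_apply,
      LinearMap.sub_apply]
    constructor
    · exact hPassoc p q t
    · linear_combination (norm := abel) hVassoc x y z - a1 p y z - a3 q x z
        + hb1 p q z + a2 t x y - hc p t y - hb2 q t x
  · -- alternating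
    rintro ⟨p, x⟩
    simp only [hbd, hPalt, hValt]
    rw [Prod.mk_eq_zero]
    exact ⟨rfl, by abel⟩
  · -- Jacobi identity
    rintro ⟨p, x⟩ ⟨q, y⟩ ⟨t, z⟩
    simp only [hbd, Prod.mk.injEq, map_add, map_sub, LinearMap.add_apply,
      LinearMap.sub_apply, Prod.mk_add_mk, Prod.mk_eq_zero]
    constructor
    · exact hPjac p q t
    · linear_combination (norm := abel) hVjac x y z + hb6 p q z + hb6 q t x
        + hb6 t p y - a4 t x y - a4 p y z - a4 q z x
        - sk y (lb p z) - sk z (lb q x) - sk x (lb t y)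
  · -- Poisson identity
    rintro ⟨p, x⟩ ⟨q, y⟩ ⟨t, z⟩
    simp only [hmd, hbd, Prod.mk.injEq, map_add, map_sub, LinearMap.add_apply,
      LinearMap.sub_apply, Prod.mk_add_mk]
    constructor
    · exact hPpois p q t
    · linear_combination (norm := abel) hVpois x y z + a7 p y z + A5' q x z
        + A6' t x y + cross1 p q z - hb4 p q z + cross2 p t y - hb5 p t y
        - hb3 q t x
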